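/- arXiv:cs/0509056 — 2 statements merged into one kernel-verified Lean document; each statement's English description precedes it below -/
import Mathlib

section
/- Let G₁, G₂ be groups of prime order p with bilinear pairing e, P ∈ G₁, y ∈ G₂, and Q, Q* ∈ G₁, s, s*, m, r ∈ ZMod p such that e(P,Q)·y^s = e(P,Q*)·y^(s*). Define R* = R · (Q · Q*⁻¹)^m and r* = r + m·(s − s*) for any R ∈ G₁. Then: (i) e(P,R)·y^r = e(P,R*)·y^(r*); (ii) R · Q^m = R* · Q*^m; (iii) r + m·s = r* + m·s*. (Perfect witness indistinguishability of Protocol 5.) -/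
/-! On `G₁ = ⟨g⟩` the pairing `e P` is the homomorphism `g ^ i ↦ e P g ^ i`, and `y` has order
dividing `p`, so exponents of `y` may be computed in `ZMod p`. The key hypothesis then says
`e P Q / e P Qs = y ^ (ss - s)`, so passing from `R` to `Rs` multiplies `e P R` by
`y ^ (m * (ss - s))`, which the shift `r ↦ rs` cancels. -/

theorem IsCyclic.map_mul_of_map_zpow {G H : Type*} [Group G] [IsCyclic G] [Group H]
    {f : G → H} (hf : ∀ (a : G) (j : ℤ), f (a ^ j) = f a ^ j) (a b : G) :
    f (a * b) = f a * f b := by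
  obtain ⟨g, hg⟩ := IsCyclic.exists_generator (α := G)
  obtain ⟨i, rfl⟩ := Subgroup.mem_zpowers_iff.mp (hg a)
  obtain ⟨k, rfl⟩ := Subgroup.mem_zpowers_iff.mp (hg b)
  rw [← zpow_add, hf, hf, hf, zpow_add]

section PowVal

variable {M : Type*} [Monoid M] {p : ℕ} {x : M}

theorem pow_val_add_of_pow_eq_one [NeZero p] (hx : x ^ p = 1) (a b : ZMod p) :
    x ^ (a + b).val = x ^ a.val * x ^ b.val := by
  rw [ZMod.val_add, ← pow_eq_pow_mod _ hx, pow_add]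

theorem pow_val_mul_of_pow_eq_one (hx : x ^ p = 1) (a b : ZMod p) :
    x ^ (a * b).val = (x ^ a.val) ^ b.val := by
  rw [ZMod.val_mul, ← pow_eq_pow_mod _ hx, pow_mul]

end PowVal

theorem stmt_12 {p : ℕ} [Fact p.Prime] {G₁ G₂ : Type*} [CommGroup G₁] [CommGroup G₂]
    [Fintype G₁] [Fintype G₂]
    (hc₁ : Fintype.card G₁ = p) (hc₂ : Fintype.card G₂ = p)
    (e : G₁ → G₁ → G₂)
    (hbil : ∀ (a b : G₁) (i j : ℤ), e (a ^ i) (b ^ j) = (e a b) ^ (i * j))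
    (P R Q Qs : G₁) (y : G₂) (s ss m r : ZMod p)
    (hkey : e P Q * y ^ s.val = e P Qs * y ^ ss.val)
    (Rs : G₁) (hRs : Rs = R * (Q * Qs⁻¹) ^ m.val)
    (rs : ZMod p) (hrs : rs = r + m * (s - ss)) :
    e P R * y ^ r.val = e P Rs * y ^ rs.val ∧
      R * Q ^ m.val = Rs * Qs ^ m.val ∧
      r + m * s = rs + m * ss := by
  have : IsCyclic G₁ := isCyclic_of_prime_card (by rw [Nat.card_eq_fintype_card, hc₁])
  let φ : G₁ →* G₂ := MonoidHom.mk' (e P) <| IsCyclic.map_mul_of_map_zpow fun b j => by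
    simpa using hbil P b 1 j
  have hy : y ^ p = 1 := hc₂ ▸ pow_card_eq_one
  have hQQs : φ Q * (φ Qs)⁻¹ = y ^ (ss - s).val := by
    rw [mul_inv_eq_iff_eq_mul, ← mul_left_inj (y ^ s.val), mul_right_comm,
      ← pow_val_add_of_pow_eq_one hy, sub_add_cancel, mul_comm _ (φ Qs)]
    exact hkey
  refine ⟨?_, by rw [hRs, mul_pow, inv_pow, mul_assoc, inv_mul_cancel_right], by rw [hrs]; ring⟩
  calc e P R * y ^ r.val = φ R * y ^ ((ss - s) * m + rs).val := by
        congr 3; rw [hrs]; ring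
    _ = φ R * (φ Q * (φ Qs)⁻¹) ^ m.val * y ^ rs.val := by
      rw [pow_val_add_of_pow_eq_one hy, pow_val_mul_of_pow_eq_one hy, hQQs, mul_assoc]
    _ = φ Rs * y ^ rs.val := by rw [hRs, map_mul, map_pow, map_mul, map_inv]
end

section
/- Let G₁, G₂ be groups of prime order p with bilinear pairing e, P ∈ G₁, y ∈ G₂, Q* ∈ G₁, s* ∈ ZMod p, and v = e(P,Q*)⁻¹ · y^(−s*). Suppose two accepting transcripts share the same commitment: e(P,T)·y^a·v^m = e(P,T')·y^(a')·v^(m') with m ≠ m'. Define Q = (T·T'⁻¹)^((m−m')⁻¹) and s = (a−a')·(m−m')⁻¹ (inverses in ZMod p). Then e(P,Q)·y^s = e(P,Q*)·y^(s*), and if moreover s ≠ s*, then e(P, (Q·Q*⁻¹)^((s*−s)⁻¹)) = y. (Extraction of a pairing preimage from two transcripts.) -/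
theorem stmt_15 {p : ℕ} [Fact p.Prime] {G₁ G₂ : Type*} [CommGroup G₁] [CommGroup G₂]
    [Fintype G₁] [Fintype G₂]
    (hc₁ : Fintype.card G₁ = p) (hc₂ : Fintype.card G₂ = p)
    (e : G₁ → G₁ → G₂)
    (hbil : ∀ (a b : G₁) (i j : ℤ), e (a ^ i) (b ^ j) = (e a b) ^ (i * j))
    (P T T' Qs : G₁) (y : G₂) (a a' m m' ss : ZMod p) (hm : m ≠ m')
    (v : G₂) (hv : v = (e P Qs)⁻¹ * y ^ (-ss).val)
    (htr : e P T * y ^ a.val * v ^ m.val = e P T' * y ^ a'.val * v ^ m'.val)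
    (Q : G₁) (hQ : Q = (T * T'⁻¹) ^ ((m - m')⁻¹).val)
    (s : ZMod p) (hs : s = (a - a') * (m - m')⁻¹) :
    e P Q * y ^ s.val = e P Qs * y ^ ss.val ∧
      (s ≠ ss → e P ((Q * Qs⁻¹) ^ ((ss - s)⁻¹).val) = y) := by
  have hp : p.Prime := Fact.out
  haveI : Fact (1 < p) := ⟨hp.one_lt⟩
  -- G₁ is cyclic
  have hcyc : IsCyclic G₁ := isCyclic_of_prime_card (p := p) (by rw [Nat.card_eq_fintype_card, hc₁])
  obtain ⟨g, hg⟩ := hcyc.exists_generator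
  have hmem : ∀ x : G₁, ∃ n : ℤ, g ^ n = x := fun x => Subgroup.mem_zpowers_iff.mp (hg x)
  obtain ⟨np, hnp⟩ := hmem P
  have epow : ∀ (x : G₁) (n : ℤ), e P (x ^ n) = (e P x) ^ n := by
    intro x n
    obtain ⟨nx, hnx⟩ := hmem x
    rw [← hnp, ← hnx, ← zpow_mul, hbil, hbil, ← zpow_mul]
    congr 1; ring
  have emul : ∀ x z : G₁, e P (x * z) = e P x * e P z := by
    intro x z
    obtain ⟨nx, hnx⟩ := hmem x
    obtain ⟨nz, hnz⟩ := hmem z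
    rw [← hnp, ← hnx, ← hnz, ← zpow_add, hbil, hbil, hbil, ← zpow_add]
    congr 1; ring
  have einv : ∀ x : G₁, e P x⁻¹ = (e P x)⁻¹ := by
    intro x
    simpa using epow x (-1)
  -- exponent arithmetic in G₂
  have hone : ∀ x : G₂, x ^ (p : ℤ) = 1 := by
    intro x
    have h : x ^ Fintype.card G₂ = 1 := pow_card_eq_one
    rw [hc₂] at h
    rw [zpow_natCast, h]
  have hcoh : ∀ (x : G₂) (i j : ℤ), (i : ZMod p) = (j : ZMod p) → x ^ i = x ^ j := by
    intro x i j hij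
    have hd : (p : ℤ) ∣ (i - j) := by
      have h0 : ((i - j : ℤ) : ZMod p) = 0 := by push_cast; rw [hij]; ring
      exact_mod_cast (ZMod.intCast_zmod_eq_zero_iff_dvd (i - j) p).mp h0
    obtain ⟨k, hk⟩ := hd
    have hi : i = j + (p : ℤ) * k := by linarith
    rw [hi, zpow_add, zpow_mul, hone, one_zpow, mul_one]
  have pzdef : ∀ (x : G₂) (z : ZMod p), x ^ z.val = x ^ ((z.val : ℤ)) := by
    intro x z; rw [zpow_natCast]
  have castval : ∀ z : ZMod p, ((z.val : ℤ) : ZMod p) = z := by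
    intro z
    push_cast
    simp [ZMod.natCast_val, ZMod.cast_id]
  have pz_add : ∀ (x : G₂) (z1 z2 : ZMod p),
      x ^ (((z1 + z2).val : ℤ)) = x ^ ((z1.val : ℤ)) * x ^ ((z2.val : ℤ)) := by
    intro x z1 z2
    rw [← zpow_add]
    exact hcoh x _ _ (by push_cast [castval]; ring)
  have pz_mul : ∀ (x : G₂) (z1 z2 : ZMod p),
      x ^ (((z1 * z2).val : ℤ)) = (x ^ ((z1.val : ℤ))) ^ ((z2.val : ℤ)) := by
    intro x z1 z2
    rw [← zpow_mul]
    exact hcoh x _ _ (by push_cast [castval]; ring)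
  have pz_zero : ∀ x : G₂, x ^ (((0 : ZMod p).val : ℤ)) = 1 := by
    intro x; simp [ZMod.val_zero]
  have pz_one : ∀ x : G₂, x ^ (((1 : ZMod p).val : ℤ)) = x := by
    intro x; simp [ZMod.val_one]
  have pz_neg : ∀ (x : G₂) (z : ZMod p), x ^ (((-z).val : ℤ)) = (x ^ ((z.val : ℤ)))⁻¹ := by
    intro x z
    have h := pz_add x (-z) z
    rw [neg_add_cancel, pz_zero] at h
    exact eq_inv_of_mul_eq_one_left h.symm
  have pz_sub : ∀ (x : G₂) (z1 z2 : ZMod p),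
      x ^ (((z1 - z2).val : ℤ)) = x ^ ((z1.val : ℤ)) / x ^ ((z2.val : ℤ)) := by
    intro x z1 z2
    rw [sub_eq_add_neg, pz_add, pz_neg, div_eq_mul_inv]
  -- rewrite everything to ℤ exponents
  simp only [pzdef] at htr hv ⊢
  have hk : m - m' ≠ 0 := sub_ne_zero.mpr hm
  -- key: e P (T * T'⁻¹)
  have hTT : e P (T * T'⁻¹) =
      y ^ (((a' - a).val : ℤ)) * v ^ (((m' - m).val : ℤ)) := by
    have ha : y ^ ((a'.val : ℤ)) = y ^ (((a' - a).val : ℤ)) * y ^ ((a.val : ℤ)) := by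
      rw [← pz_add, show a' - a + a = a' from by ring]
    have hmv : v ^ ((m'.val : ℤ)) = v ^ (((m' - m).val : ℤ)) * v ^ ((m.val : ℤ)) := by
      rw [← pz_add, show m' - m + m = m' from by ring]
    have main : e P (T * T'⁻¹) * (e P T' * (y ^ ((a.val : ℤ)) * v ^ ((m.val : ℤ)))) =
        (y ^ (((a' - a).val : ℤ)) * v ^ (((m' - m).val : ℤ))) *
          (e P T' * (y ^ ((a.val : ℤ)) * v ^ ((m.val : ℤ)))) := by
      rw [emul, einv]
      calc e P T * (e P T')⁻¹ * (e P T' * (y ^ ((a.val : ℤ)) * v ^ ((m.val : ℤ))))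
          = e P T * y ^ ((a.val : ℤ)) * v ^ ((m.val : ℤ)) := by group
        _ = e P T' * y ^ ((a'.val : ℤ)) * v ^ ((m'.val : ℤ)) := htr
        _ = _ := by rw [ha, hmv]; simp only [mul_comm, mul_assoc, mul_left_comm]
    exact mul_right_cancel main
  have hQe : e P Q = y ^ (((-s).val : ℤ)) * v⁻¹ := by
    rw [hQ, ← zpow_natCast, epow, hTT, mul_zpow, ← pz_mul, ← pz_mul]
    have e1 : (a' - a) * (m - m')⁻¹ = -s := by rw [hs]; ring
    have e2 : (m' - m) * (m - m')⁻¹ = -1 := by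
      rw [show (m' - m) = -(m - m') by ring, neg_mul, mul_inv_cancel₀ hk]
    rw [e1, e2, show (-1 : ZMod p) = -(1 : ZMod p) by ring, pz_neg, pz_neg, pz_one]
  have hvinv : v⁻¹ = e P Qs * y ^ ((ss.val : ℤ)) := by
    rw [hv, mul_inv, inv_inv, pz_neg, inv_inv]
  have goal1 : e P Q * y ^ ((s.val : ℤ)) = e P Qs * y ^ ((ss.val : ℤ)) := by
    rw [hQe, hvinv, pz_neg]
    simp [mul_comm, mul_assoc, mul_left_comm]
  refine ⟨goal1, ?_⟩
  intro hss
  have hks : ss - s ≠ 0 := sub_ne_zero.mpr (Ne.symm hss)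
  have hQQ : e P (Q * Qs⁻¹) = y ^ (((ss - s).val : ℤ)) := by
    rw [emul, einv, pz_sub]
    have hQ1 : e P Q = (e P Qs * y ^ ((ss.val : ℤ))) * (y ^ ((s.val : ℤ)))⁻¹ :=
      eq_mul_inv_of_mul_eq goal1
    rw [hQ1, div_eq_mul_inv]
    simp [mul_comm, mul_assoc, mul_left_comm]
  rw [← zpow_natCast, epow, hQQ, ← pz_mul, mul_inv_cancel₀ hks, pz_one]
end
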